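/- arXiv:1806.07077 — 8 statements merged into one kernel-verified Lean document; each statement's English description precedes it below -/
import Mathlib

section
/- Let S be a monoid and A an S-act. A family {A_i}_{i∈I} of pairwise disjoint subacts of A is collectively large in A if and only if the Rees congruence ρ_Σ generated by Σ = {A_i} is an essential congruence on A. -/
universe u

variable {S : Type u} [Monoid S]

/-- An `S`-act homomorphism (equivariant map). -/
def IsActHom (S : Type u) [Monoid S] {A B : Type u} [MulAction S A] [MulAction S B]
    (f : A → B) : Prop :=
  ∀ (s : S) (a : A), f (s • a) = s • f a

/-- A subact: a nonempty subset closed under the action. -/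
def IsSubact (S : Type u) [Monoid S] {A : Type u} [MulAction S A] (B : Set A) : Prop :=
  B.Nonempty ∧ ∀ (s : S), ∀ a ∈ B, s • a ∈ B

/-- A congruence on an `S`-act: an equivalence relation compatible with the action. -/
structure ActCong (S : Type u) [Monoid S] (A : Type u) [MulAction S A] where
  r : A → A → Prop
  iseqv : Equivalence r
  compat : ∀ (s : S) (a b : A), r a b → r (s • a) (s • b)

def ActCong.toSetoid {A : Type u} [MulAction S A] (χ : ActCong S A) : Setoid A :=
  ⟨χ.r, χ.iseqv⟩

instance actQuotSMul {A : Type u} [MulAction S A] (χ : ActCong S A) :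
    SMul S (Quotient χ.toSetoid) :=
  ⟨fun s => Quotient.map (fun a => s • a) (fun a b h => χ.compat s a b h)⟩

instance actQuotMulAction {A : Type u} [MulAction S A] (χ : ActCong S A) :
    MulAction S (Quotient χ.toSetoid) where
  one_smul := by
    intro x
    induction x using Quotient.inductionOn with
    | h a => exact congrArg (Quotient.mk χ.toSetoid) (one_smul S a)
  mul_smul := by
    intro s t x
    induction x using Quotient.inductionOn with
    | h a => exact congrArg (Quotient.mk χ.toSetoid) (mul_smul s t a)

/-- The Rees congruence determined by an action-closed subset `B`. -/
def reesCong {A : Type u} [MulAction S A] (B : Set A)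
    (hB : ∀ (s : S), ∀ a ∈ B, s • a ∈ B) : ActCong S A where
  r a b := a = b ∨ (a ∈ B ∧ b ∈ B)
  iseqv := by
    constructor
    · exact fun a => Or.inl rfl
    · rintro a b (rfl | ⟨h1, h2⟩)
      exacts [Or.inl rfl, Or.inr ⟨h2, h1⟩]
    · rintro a b c (rfl | ⟨h1, h2⟩) h
      · exact h
      · rcases h with rfl | ⟨h3, h4⟩
        exacts [Or.inr ⟨h1, h2⟩, Or.inr ⟨h1, h4⟩]
  compat := by
    rintro s a b (rfl | ⟨h1, h2⟩)
    exacts [Or.inl rfl, Or.inr ⟨hB s a h1, hB s b h2⟩]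

/-- A Hoehnke radical on `S`-acts. -/
structure HoehnkeRadical (S : Type u) [Monoid S] : Type (u + 1) where
  rad : ∀ (A : Type u) [MulAction S A], ActCong S A
  functorial : ∀ {A B : Type u} [MulAction S A] [MulAction S B] (f : A → B),
    IsActHom S f → ∀ a a' : A, (rad A).r a a' → (rad B).r (f a) (f a')
  radQuot : ∀ (A : Type u) [MulAction S A],
    ∀ x y : Quotient (rad A).toSetoid, (rad (Quotient (rad A).toSetoid)).r x y → x = y

/-- The closure `c^r_A(B)`: preimage of the `r(A/B)`-class of the collapsed point `B`. -/
def rClosure (r : HoehnkeRadical S) {A : Type u} [MulAction S A] (B : Set A)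
    (hB : ∀ (s : S), ∀ a ∈ B, s • a ∈ B) : Set A :=
  {a : A | ∃ b ∈ B, (r.rad (Quotient (reesCong B hB).toSetoid)).r
      (Quotient.mk (reesCong B hB).toSetoid a) (Quotient.mk (reesCong B hB).toSetoid b)}

/-- `B` is `r`-dense in `A`: the Rees quotient `A/B` is a radical act, `r(A/B) = ∇`. -/
def IsRDense (r : HoehnkeRadical S) {A : Type u} [MulAction S A] (B : Set A)
    (hB : ∀ (s : S), ∀ a ∈ B, s • a ∈ B) : Prop :=
  ∀ x y : Quotient (reesCong B hB).toSetoid, (r.rad (Quotient (reesCong B hB).toSetoid)).r x y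

theorem image_closed {A C : Type u} [MulAction S A] [MulAction S C] {f : A → C}
    (hf : IsActHom S f) {B : Set A} (hB : ∀ (s : S), ∀ a ∈ B, s • a ∈ B) :
    ∀ (s : S), ∀ c ∈ f '' B, s • c ∈ f '' B := by
  rintro s c ⟨a, ha, rfl⟩
  exact ⟨s • a, hB s a ha, hf s a⟩

theorem range_closed {A C : Type u} [MulAction S A] [MulAction S C] {f : A → C}
    (hf : IsActHom S f) :
    ∀ (s : S), ∀ c ∈ Set.range f, s • c ∈ Set.range f := by
  rintro s c ⟨a, rfl⟩
  exact ⟨s • a, hf s a⟩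

theorem rClosure_closed (r : HoehnkeRadical S) {A : Type u} [MulAction S A]
    (B : Set A) (hB : ∀ (s : S), ∀ a ∈ B, s • a ∈ B) :
    ∀ (s : S), ∀ a ∈ rClosure r B hB, s • a ∈ rClosure r B hB := by
  rintro s a ⟨b, hb, hab⟩
  exact ⟨s • b, hB s b hb, (r.rad _).compat s _ _ hab⟩

/-- The join of two congruences. -/
def congJoin {A : Type u} [MulAction S A] (τ₁ τ₂ : ActCong S A) : ActCong S A where
  r a b := ∀ θ : ActCong S A, (∀ x y, τ₁.r x y → θ.r x y) → (∀ x y, τ₂.r x y → θ.r x y) → θ.r a b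
  iseqv := by
    constructor
    · exact fun a θ _ _ => θ.iseqv.refl a
    · exact fun h θ h1 h2 => θ.iseqv.symm (h θ h1 h2)
    · exact fun h h' θ h1 h2 => θ.iseqv.trans (h θ h1 h2) (h' θ h1 h2)
  compat := fun s a b h θ h1 h2 => θ.compat s a b (h θ h1 h2)

/-- For `κ ≤ τ` the induced congruence `τ/κ` on the quotient `A/κ`. -/
def quotCong {A : Type u} [MulAction S A] (κ τ : ActCong S A)
    (h : ∀ a b, κ.r a b → τ.r a b) : ActCong S (Quotient κ.toSetoid) where
  r x y := ∃ a b : A, x = Quotient.mk κ.toSetoid a ∧ y = Quotient.mk κ.toSetoid b ∧ τ.r a b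
  iseqv := by
    constructor
    · intro x
      obtain ⟨a, rfl⟩ := Quotient.exists_rep x
      exact ⟨a, a, rfl, rfl, τ.iseqv.refl a⟩
    · rintro x y ⟨a, b, rfl, rfl, hab⟩
      exact ⟨b, a, rfl, rfl, τ.iseqv.symm hab⟩
    · rintro x y z ⟨a, b, rfl, hy, hab⟩ ⟨b', c, hy', rfl, hbc⟩
      refine ⟨a, c, rfl, rfl, τ.iseqv.trans hab (τ.iseqv.trans ?_ hbc)⟩
      exact h _ _ (Quotient.exact (hy.symm.trans hy'))
  compat := by
    rintro s x y ⟨a, b, rfl, rfl, hab⟩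
    exact ⟨s • a, s • b, rfl, rfl, τ.compat s a b hab⟩

/-- The smallest extension of an on-`B` congruence `χ` to the whole act. -/
def extCong {A : Type u} [MulAction S A] (χ : A → A → Prop)
    (hsymm : ∀ a b, χ a b → χ b a) (htrans : ∀ a b c, χ a b → χ b c → χ a c)
    (hcompat : ∀ (s : S) (a b : A), χ a b → χ (s • a) (s • b)) : ActCong S A where
  r a b := a = b ∨ χ a b
  iseqv := by
    constructor
    · exact fun a => Or.inl rfl
    · rintro a b (rfl | h)
      exacts [Or.inl rfl, Or.inr (hsymm _ _ h)]
    · rintro a b c (rfl | h) h'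
      · exact h'
      · rcases h' with rfl | h'
        exacts [Or.inr h, Or.inr (htrans _ _ _ h h')]
  compat := by
    rintro s a b (rfl | h)
    exacts [Or.inl rfl, Or.inr (hcompat s a b h)]

/-! Congruences on `A` are exactly the kernels of act homomorphisms out of `A` (`θ` is the kernel
of `A → A/θ`), and `θ ∧ ρ_Σ ≠ Δ_A` says precisely that `θ` identifies two distinct points of
some `A_i`, i.e. that `A → A/θ` is not injective on that `A_i`. So both sides of the equivalence
say that a homomorphism out of `A` which is injective on every `A_i` has trivial kernel. -/

def ActCong.ker {A C : Type u} [MulAction S A] [MulAction S C] (g : A → C)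
    (hg : IsActHom S g) : ActCong S A where
  r x y := g x = g y
  iseqv := ⟨fun _ => rfl, Eq.symm, Eq.trans⟩
  compat s x y h := by rw [hg, hg, h]

theorem isActHom_quotient_mk {A : Type u} [MulAction S A] (θ : ActCong S A) :
    IsActHom S (Quotient.mk θ.toSetoid) :=
  fun _ _ => rfl

theorem injOn_quotient_mk_iff {A : Type u} [MulAction S A] (θ : ActCong S A) (B : Set A) :
    Set.InjOn (Quotient.mk θ.toSetoid) B ↔ ∀ a ∈ B, ∀ b ∈ B, θ.r a b → a = b :=
  forall₂_congr fun _ _ => forall₂_congr fun _ _ => imp_congr_left Quotient.eq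

theorem injective_quotient_mk_iff {A : Type u} [MulAction S A] (θ : ActCong S A) :
    Function.Injective (Quotient.mk θ.toSetoid) ↔ ∀ a b, θ.r a b → a = b :=
  forall₂_congr fun _ _ => imp_congr_left Quotient.eq

theorem collectively_large_iff_rees_essential_general {S : Type u} [Monoid S] {A : Type u}
    [MulAction S A] {ι : Type u} (F : ι → Set A) :
    (∀ (C : Type u) [MulAction S C] (g : A → C), IsActHom S g →
        (∀ i, Set.InjOn g (F i)) → Function.Injective g)
      ↔
    (∀ θ : ActCong S A, (∃ a b : A, a ≠ b ∧ θ.r a b) →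
        ∃ a b : A, a ≠ b ∧ θ.r a b ∧ (a = b ∨ ∃ i, a ∈ F i ∧ b ∈ F i)) := by
  constructor
  · rintro hlarge θ ⟨a, b, hab, hθab⟩
    by_contra hsep
    have hinjOn : ∀ i, Set.InjOn (Quotient.mk θ.toSetoid) (F i) := fun i =>
      (injOn_quotient_mk_iff θ (F i)).2 fun x hx y hy hθxy =>
        by_contra fun hxy => hsep ⟨x, y, hxy, hθxy, .inr ⟨i, hx, hy⟩⟩
    have hinj := hlarge _ _ (isActHom_quotient_mk θ) hinjOn
    exact hab ((injective_quotient_mk_iff θ).1 hinj a b hθab)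
  · intro hess C _ g hg hinjOn a b hgab
    by_contra hab
    obtain ⟨x, y, hxy, hgxy, hrees⟩ := hess (ActCong.ker g hg) ⟨a, b, hab, hgab⟩
    obtain ⟨i, hx, hy⟩ := hrees.resolve_left hxy
    exact hxy (hinjOn i hx hy hgxy)

theorem collectively_large_iff_rees_essential {S : Type u} [Monoid S] {A : Type u}
    [MulAction S A] {ι : Type u} (F : ι → Set A)
    (hsub : ∀ i, IsSubact S (F i))
    (hdisj : ∀ i j, i ≠ j → F i ∩ F j = ∅) :
    (∀ (C : Type u) [MulAction S C] (g : A → C), IsActHom S g →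
        (∀ i, Set.InjOn g (F i)) → Function.Injective g)
      ↔
    (∀ θ : ActCong S A, (∃ a b : A, a ≠ b ∧ θ.r a b) →
        ∃ a b : A, a ≠ b ∧ θ.r a b ∧ (a = b ∨ ∃ i, a ∈ F i ∧ b ∈ F i)) :=
  collectively_large_iff_rees_essential_general F
end

section
/- Let S be a monoid, A an S-act, χ a congruence on A, and κ a congruence on A maximal with the property χ ∧ κ = Δ_A. Then the congruence (κ ∨ χ)/κ is an essential congruence on the quotient S-act A/κ. -/
universe u

variable {S : Type u} [Monoid S]

/-!
Pull a nontrivial congruence `θ` on `A/κ` back to `A`. The pullback contains `κ` strictly, so by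
maximality it identifies some `a ≠ b` with `χ.r a b`. Since `χ ∧ κ = Δ_A`, the classes of `a` and `b`
in `A/κ` are distinct, and they are related both by `θ` and by `(κ ∨ χ)/κ`.
-/

namespace ActCong

variable {A B : Type u} [MulAction S A] [MulAction S B]

theorem isActHom_quotient_mk (κ : ActCong S A) : IsActHom S (Quotient.mk κ.toSetoid) :=
  fun _ _ => rfl

def comap (θ : ActCong S B) (f : A → B) (hf : IsActHom S f) : ActCong S A where
  r a b := θ.r (f a) (f b)
  iseqv := ⟨fun a => θ.iseqv.refl (f a), θ.iseqv.symm, θ.iseqv.trans⟩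
  compat s a b h := by
    simpa only [hf s] using θ.compat s (f a) (f b) h

theorem le_comap_quotient_mk (κ : ActCong S A) (θ : ActCong S (Quotient κ.toSetoid)) (a b : A)
    (h : κ.r a b) : (θ.comap _ κ.isActHom_quotient_mk).r a b := by
  change θ.r ⟦a⟧ ⟦b⟧
  rw [Quotient.sound (s := κ.toSetoid) h]
  exact θ.iseqv.refl _

theorem congJoin_r_of_right {τ₁ τ₂ : ActCong S A} {a b : A} (h : τ₂.r a b) :
    (congJoin τ₁ τ₂).r a b :=
  fun _ _ hle₂ => hle₂ a b h

theorem quotCong_r_mk {κ τ : ActCong S A} (hκτ : ∀ a b, κ.r a b → τ.r a b) {a b : A}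
    (h : τ.r a b) : (quotCong κ τ hκτ).r ⟦a⟧ ⟦b⟧ :=
  ⟨a, b, rfl, rfl, h⟩

end ActCong

open ActCong

theorem quot_join_essential {S : Type u} [Monoid S] {A : Type u} [MulAction S A]
    (χ κ : ActCong S A)
    (hmeet : ∀ a b, χ.r a b → κ.r a b → a = b)
    (hmax : ∀ κ' : ActCong S A, (∀ a b, κ.r a b → κ'.r a b) →
      (∃ a b, κ'.r a b ∧ ¬ κ.r a b) → ∃ a b, a ≠ b ∧ κ'.r a b ∧ χ.r a b) :
    ∀ θ : ActCong S (Quotient κ.toSetoid), (∃ x y, x ≠ y ∧ θ.r x y) →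
      ∃ x y, x ≠ y ∧ θ.r x y ∧
        (quotCong κ (congJoin κ χ) (fun a b h => fun _ h1 _ => h1 a b h)).r x y := by
  rintro θ ⟨⟨a₀⟩, ⟨b₀⟩, hxy, hθ⟩
  have hκ_lt : ∃ a b, (θ.comap _ κ.isActHom_quotient_mk).r a b ∧ ¬ κ.r a b :=
    ⟨a₀, b₀, hθ, fun h => hxy (Quotient.sound h)⟩
  obtain ⟨a, b, hab, hθab, hχab⟩ := hmax _ (le_comap_quotient_mk κ θ) hκ_lt
  refine ⟨⟦a⟧, ⟦b⟧, fun h => hab (hmeet a b hχab (Quotient.exact h)), hθab, ?_⟩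
  exact quotCong_r_mk _ (congJoin_r_of_right hχab)
end

section
/- Let r be a Hoehnke radical on S-acts. For each S-act A and subact B ≤ A, define c^r_A(B) = π⁻¹([B]_{r(A/B)}), where π: A → A/B is the projection onto the Rees quotient and [B]_{r(A/B)} is the r(A/B)-class of the point that B collapses to. Then c^r is a closure operator: (1) B ≤ c^r_A(B); (2) B₁ ≤ B₂ ≤ A implies c^r_A(B₁) ≤ c^r_A(B₂); (3) for every homomorphism f: A → C of S-acts, f(c^r_A(B)) ≤ c^r_C(f(B)). Moreover c^r is idempotent: c^r_A(c^r_A(B)) = c^r_A(B). -/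
universe u

variable {S : Type u} [Monoid S]

/-!
Every closure property comes from one observation: an act homomorphism `g : A → Q` that is
constant on a subact `B` factors through the Rees quotient `A/B`, so functoriality of `r` sends
`r(A/B)`-related points of `A/B` to `r(Q)`-related points of `Q`. Taking `g` to be `A → C → C/B'`
with `f(B) ⊆ B'` gives monotonicity and continuity. For idempotence take `g : A → (A/B)/r(A/B)`:
it is constant on `c^r_A(B)`, and `r` of its target is trivial, so a point that is
`r(A/c^r_A(B))`-related to `c^r_A(B)` is already `r(A/B)`-related to `B`.
-/

theorem IsActHom.comp {A B C : Type u} [MulAction S A] [MulAction S B] [MulAction S C]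
    {g : B → C} {f : A → B} (hg : IsActHom S g) (hf : IsActHom S f) : IsActHom S (g ∘ f) :=
  fun s a => by simp only [Function.comp_apply, hf s a, hg s (f a)]

theorem isActHom_quotientMk {A : Type u} [MulAction S A] (χ : ActCong S A) :
    IsActHom S (Quotient.mk χ.toSetoid) :=
  fun _ _ => rfl

section ReesLift

variable {A Q : Type u} [MulAction S A] [MulAction S Q] {B : Set A}
  {hB : ∀ (s : S), ∀ a ∈ B, s • a ∈ B}

def reesLift (g : A → Q) (hg : ∀ x ∈ B, ∀ y ∈ B, g x = g y) :
    Quotient (reesCong B hB).toSetoid → Q :=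
  Quotient.lift g (by
    rintro x y (rfl | ⟨hx, hy⟩)
    exacts [rfl, hg x hx y hy])

theorem isActHom_reesLift {g : A → Q} (hg_hom : IsActHom S g)
    (hg : ∀ x ∈ B, ∀ y ∈ B, g x = g y) : IsActHom S (reesLift (hB := hB) g hg) := by
  intro s x
  induction x using Quotient.inductionOn with
  | h a => exact hg_hom s a

theorem exists_rad_rel_of_mem_rClosure (r : HoehnkeRadical S) {g : A → Q}
    (hg_hom : IsActHom S g) (hg : ∀ x ∈ B, ∀ y ∈ B, g x = g y) {a : A}
    (ha : a ∈ rClosure r B hB) : ∃ b ∈ B, (r.rad Q).r (g a) (g b) := by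
  obtain ⟨b, hb, hab⟩ := ha
  exact ⟨b, hb, r.functorial _ (isActHom_reesLift hg_hom hg) _ _ hab⟩

end ReesLift

section Closure

variable (r : HoehnkeRadical S) {A : Type u} [MulAction S A]

theorem subset_rClosure (B : Set A) (hB : ∀ (s : S), ∀ a ∈ B, s • a ∈ B) :
    B ⊆ rClosure r B hB :=
  fun b hb => ⟨b, hb, (r.rad _).iseqv.refl _⟩

theorem mapsTo_rClosure {C : Type u} [MulAction S C] {f : A → C} (hf : IsActHom S f)
    {B : Set A} {B' : Set C} (hB : ∀ (s : S), ∀ a ∈ B, s • a ∈ B)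
    (hB' : ∀ (s : S), ∀ c ∈ B', s • c ∈ B') (hBB' : Set.MapsTo f B B') :
    Set.MapsTo f (rClosure r B hB) (rClosure r B' hB') := by
  intro a ha
  have hconst : ∀ x ∈ B, ∀ y ∈ B, Quotient.mk (reesCong B' hB').toSetoid (f x) =
      Quotient.mk (reesCong B' hB').toSetoid (f y) :=
    fun x hx y hy => Quotient.sound (Or.inr ⟨hBB' hx, hBB' hy⟩)
  obtain ⟨b, hb, hab⟩ :=
    exists_rad_rel_of_mem_rClosure r ((isActHom_quotientMk _).comp hf) hconst ha
  exact ⟨f b, hBB' hb, hab⟩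

/-- Any two points of `c^r_A(B)` are `r(A/B)`-related in `A/B`, since both are related to
the single point that `B` collapses to. -/
theorem rad_rel_of_mem_rClosure {B : Set A} {hB : ∀ (s : S), ∀ a ∈ B, s • a ∈ B} {x y : A}
    (hx : x ∈ rClosure r B hB) (hy : y ∈ rClosure r B hB) :
    (r.rad _).r (Quotient.mk (reesCong B hB).toSetoid x)
      (Quotient.mk (reesCong B hB).toSetoid y) := by
  obtain ⟨bx, hbx, hx⟩ := hx
  obtain ⟨b_y, hby, hy⟩ := hy
  have hb : Quotient.mk (reesCong B hB).toSetoid bx = Quotient.mk _ b_y :=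
    Quotient.sound (Or.inr ⟨hbx, hby⟩)
  rw [hb] at hx
  exact (r.rad _).iseqv.trans hx ((r.rad _).iseqv.symm hy)

theorem rClosure_rClosure (B : Set A) (hB : ∀ (s : S), ∀ a ∈ B, s • a ∈ B) :
    rClosure r (rClosure r B hB) (rClosure_closed r B hB) = rClosure r B hB := by
  refine Set.Subset.antisymm ?_ (subset_rClosure r _ _)
  intro a ha
  set ρ := r.rad (Quotient (reesCong B hB).toSetoid)
  let g : A → Quotient ρ.toSetoid :=
    Quotient.mk ρ.toSetoid ∘ Quotient.mk (reesCong B hB).toSetoid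
  have hg_hom : IsActHom S g := (isActHom_quotientMk _).comp (isActHom_quotientMk _)
  have hconst : ∀ x ∈ rClosure r B hB, ∀ y ∈ rClosure r B hB, g x = g y :=
    fun x hx y hy => Quotient.sound (rad_rel_of_mem_rClosure r hx hy)
  obtain ⟨d, hd, had⟩ := exists_rad_rel_of_mem_rClosure r hg_hom hconst ha
  have had' : ρ.r (Quotient.mk _ a) (Quotient.mk _ d) := Quotient.exact (r.radQuot _ _ _ had)
  obtain ⟨b, hb, hdb⟩ := hd
  exact ⟨b, hb, ρ.iseqv.trans had' hdb⟩

end Closure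

theorem rClosure_is_idempotent_closure_operator {S : Type u} [Monoid S]
    (r : HoehnkeRadical S) {A : Type u} [MulAction S A]
    (B : Set A) (hB : IsSubact S B) :
    B ⊆ rClosure r B hB.2 ∧
    (∀ (B₁ B₂ : Set A) (h1 : IsSubact S B₁) (h2 : IsSubact S B₂), B₁ ⊆ B₂ →
      rClosure r B₁ h1.2 ⊆ rClosure r B₂ h2.2) ∧
    (∀ (C : Type u) [MulAction S C] (f : A → C) (hf : IsActHom S f),
      f '' rClosure r B hB.2 ⊆ rClosure r (f '' B) (image_closed hf hB.2)) ∧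
    rClosure r (rClosure r B hB.2) (rClosure_closed r B hB.2) = rClosure r B hB.2 := by
  refine ⟨subset_rClosure r B hB.2, ?_, ?_, rClosure_rClosure r B hB.2⟩
  · intro B₁ B₂ h1 h2 hsub
    exact mapsTo_rClosure r (f := id) (fun _ _ => rfl) h1.2 h2.2 hsub
  · intro C _ f hf
    exact (mapsTo_rClosure r hf hB.2 _ (Set.mapsTo_image f B)).image_subset
end

section
/- Let r be a Hoehnke radical on S-acts, B an r-dense subact of an S-act A (i.e., c^r_A(B) = A, equivalently r(A/B) = ∇_{A/B}), and χ a congruence on B. Then B/χ is r-dense in A/(χ ∨ Δ_A), where χ ∨ Δ_A is the smallest congruence on A extending χ. -/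
universe u

variable {S : Type u} [Monoid S]

/-!
`B/χ` is the image of `B` under the surjective homomorphism `A → A/(χ ∨ Δ_A)`. A surjective
homomorphism `f` induces a surjective homomorphism of Rees quotients `A/B → C/f(B)`, and
functoriality of `r` pushes `r(A/B) = ∇` forward to `r(C/f(B)) = ∇`.
-/

section

variable {A C : Type u} [MulAction S A] [MulAction S C]

theorem HoehnkeRadical.rad_total_of_surjective (r : HoehnkeRadical S) {f : A → C}
    (hf : IsActHom S f) (hsurj : Function.Surjective f) (hA : ∀ a a' : A, (r.rad A).r a a') :
    ∀ c c' : C, (r.rad C).r c c' := by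
  intro c c'
  obtain ⟨a, rfl⟩ := hsurj c
  obtain ⟨a', rfl⟩ := hsurj c'
  exact r.functorial f hf a a' (hA a a')

def reesMap (f : A → C) {B : Set A} {D : Set C} (hB : ∀ (s : S), ∀ a ∈ B, s • a ∈ B)
    (hD : ∀ (s : S), ∀ c ∈ D, s • c ∈ D) (hBD : Set.MapsTo f B D) :
    Quotient (reesCong B hB).toSetoid → Quotient (reesCong D hD).toSetoid :=
  Quotient.lift (fun a => Quotient.mk _ (f a)) <| by
    rintro a b (rfl | ⟨ha, hb⟩)
    · rfl
    · exact Quotient.sound (Or.inr ⟨hBD ha, hBD hb⟩)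

variable {f : A → C} {B : Set A} {D : Set C} {hB : ∀ (s : S), ∀ a ∈ B, s • a ∈ B}
  {hD : ∀ (s : S), ∀ c ∈ D, s • c ∈ D}

theorem reesMap_isActHom (hf : IsActHom S f) (hBD : Set.MapsTo f B D) :
    IsActHom S (reesMap f hB hD hBD) := by
  intro s x
  induction x using Quotient.inductionOn with
  | h a => exact congrArg (Quotient.mk _) (hf s a)

theorem reesMap_surjective (hsurj : Function.Surjective f) (hBD : Set.MapsTo f B D) :
    Function.Surjective (reesMap f hB hD hBD) :=
  Function.Surjective.of_comp (g := Quotient.mk _) (Quotient.mk_surjective.comp hsurj)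

theorem IsRDense.image_of_surjective {r : HoehnkeRadical S} (hf : IsActHom S f)
    (hsurj : Function.Surjective f) (hdense : IsRDense r B hB) :
    IsRDense r (f '' B) (image_closed hf hB) :=
  r.rad_total_of_surjective (reesMap_isActHom hf (Set.mapsTo_image f B))
    (reesMap_surjective hsurj (Set.mapsTo_image f B)) hdense

end

theorem quotient_of_rdense_is_rdense_general {S : Type u} [Monoid S] (r : HoehnkeRadical S)
    {A : Type u} [MulAction S A] (B : Set A) (hB : IsSubact S B)
    (hdense : IsRDense r B hB.2)
    (χ : A → A → Prop)
    (hsymm : ∀ a b, χ a b → χ b a)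
    (htrans : ∀ a b c, χ a b → χ b c → χ a c)
    (hcompat : ∀ (s : S) (a b : A), χ a b → χ (s • a) (s • b)) :
    IsRDense r (Quotient.mk (extCong χ hsymm htrans hcompat).toSetoid '' B)
      (image_closed (f := Quotient.mk (extCong χ hsymm htrans hcompat).toSetoid)
        (fun _ _ => rfl) hB.2) :=
  hdense.image_of_surjective (fun _ _ => rfl) Quotient.mk_surjective

theorem quotient_of_rdense_is_rdense {S : Type u} [Monoid S] (r : HoehnkeRadical S)
    {A : Type u} [MulAction S A] (B : Set A) (hB : IsSubact S B)
    (hdense : IsRDense r B hB.2)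
    (χ : A → A → Prop)
    (hdom : ∀ a b, χ a b → a ∈ B ∧ b ∈ B)
    (hrefl : ∀ a ∈ B, χ a a)
    (hsymm : ∀ a b, χ a b → χ b a)
    (htrans : ∀ a b c, χ a b → χ b c → χ a c)
    (hcompat : ∀ (s : S) (a b : A), χ a b → χ (s • a) (s • b)) :
    IsRDense r (Quotient.mk (extCong χ hsymm htrans hcompat).toSetoid '' B)
      (image_closed (f := Quotient.mk (extCong χ hsymm htrans hcompat).toSetoid)
        (fun _ _ => rfl) hB.2) :=
  quotient_of_rdense_is_rdense_general r B hB hdense χ hsymm htrans hcompat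
end

section
/- Let r be a Hoehnke radical on S-acts and B an r-closed subact of an S-act A (i.e., c^r_A(B) = B). Then for every nontrivial r(A)-class X_A that is a subact of A and every nontrivial r(B)-class X_B that is a subact of B, either X_A ∩ X_B = ∅ or X_B ≤ X_A ≤ B. -/
/-! Both inclusions come from functoriality of `r`. The inclusion `B ↪ A` carries `r(B)`-related
pairs to `r(A)`-related ones, so an `r(B)`-class meeting an `r(A)`-class lies inside it. The Rees
projection `A → A/B` carries every element `r(A)`-related to a point of `B` into the `r(A/B)`-class
of the collapsed point, i.e. into `c^r_A(B)`, which is `B` itself when `B` is `r`-closed. -/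

universe u

variable {S : Type u} [Monoid S]

namespace HoehnkeRadical

variable (r : HoehnkeRadical S) {A : Type u} [MulAction S A]

theorem rad_rel_of_rad_subMulAction_rel (B : SubMulAction S A) {x y : B}
    (h : (r.rad B).r x y) : (r.rad A).r x y :=
  r.functorial Subtype.val (fun _ _ => rfl) x y h

theorem mem_rClosure_of_rad_rel {B : Set A} (hB : ∀ (s : S), ∀ a ∈ B, s • a ∈ B) {a b : A}
    (hb : b ∈ B) (h : (r.rad A).r a b) : a ∈ rClosure r B hB :=
  ⟨b, hb, r.functorial _ (fun _ _ => rfl) a b h⟩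

end HoehnkeRadical

theorem classes_of_rclosed_subact_general {S : Type u} [Monoid S] (r : HoehnkeRadical S)
    {A : Type u} [MulAction S A]
    (B : SubMulAction S A)
    (hclosed : rClosure r (B : Set A) (fun s a ha => B.smul_mem' s ha) = (B : Set A))
    (XA : Set A) (aA : A) (hXA : XA = {x | (r.rad A).r x aA})
    (XB : Set ↥B) (bB : ↥B) (hXB : XB = {x | (r.rad ↥B).r x bB}) :
    XA ∩ (Subtype.val '' XB) = ∅ ∨ ((Subtype.val '' XB) ⊆ XA ∧ XA ⊆ (B : Set A)) := by
  rcases (XA ∩ (Subtype.val '' XB)).eq_empty_or_nonempty with h | ⟨_, hxA, x, hxB, rfl⟩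
  · exact Or.inl h
  subst hXA hXB
  have RA := (r.rad A).iseqv
  have hx : (r.rad A).r x bB := r.rad_rel_of_rad_subMulAction_rel B hxB
  refine Or.inr ⟨?_, fun a ha => ?_⟩
  · rintro _ ⟨y, hy, rfl⟩
    exact RA.trans (RA.trans (r.rad_rel_of_rad_subMulAction_rel B hy) (RA.symm hx)) hxA
  · rw [← hclosed]
    exact r.mem_rClosure_of_rad_rel _ x.2 (RA.trans ha (RA.symm hxA))

theorem classes_of_rclosed_subact {S : Type u} [Monoid S] (r : HoehnkeRadical S)
    {A : Type u} [MulAction S A]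
    (B : SubMulAction S A) (hBne : (B : Set A).Nonempty)
    (hclosed : rClosure r (B : Set A) (fun s a ha => B.smul_mem' s ha) = (B : Set A))
    (XA : Set A) (aA : A) (hXA : XA = {x | (r.rad A).r x aA})
    (hXAnt : XA.Nontrivial) (hXAcl : ∀ (s : S), ∀ x ∈ XA, s • x ∈ XA)
    (XB : Set ↥B) (bB : ↥B) (hXB : XB = {x | (r.rad ↥B).r x bB})
    (hXBnt : XB.Nontrivial) (hXBcl : ∀ (s : S), ∀ x ∈ XB, s • x ∈ XB) :
    XA ∩ (Subtype.val '' XB) = ∅ ∨ ((Subtype.val '' XB) ⊆ XA ∧ XA ⊆ (B : Set A)) :=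
  classes_of_rclosed_subact_general r B hclosed XA aA hXA XB bB hXB
end

section
/- Let r be a Hoehnke radical on S-acts such that the semisimple class S_r (acts A with r(A) = Δ_A) is closed under coproducts (disjoint unions). If B is a proper r-dense subact of a semisimple S-act A (A ∈ S_r, B ≤ A, B ≠ A, r(A/B) = ∇), then there exist x ∈ A \ B and s ∈ S such that sx ∈ B. -/
universe u

variable {S : Type u} [Monoid S]

/-! If no element outside `B` is moved into `B`, then `A \ B` is a subact and collapsing `B`
to a point is a homomorphism `A → 1 ⊔ (A \ B)`. The target is semisimple (a coproduct of a
trivial act and a subact of `A`), so by `r`-density of `B` this homomorphism is constant, which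
is absurd since it separates `B` from `A \ B`. -/

namespace HoehnkeRadical

def IsSemisimple (r : HoehnkeRadical S) (A : Type u) [MulAction S A] : Prop :=
  ∀ x y : A, (r.rad A).r x y → x = y

def SemisimpleClosedUnderCoproducts (r : HoehnkeRadical S) : Prop :=
  ∀ (ι : Type u) (F : ι → Type u) [∀ i, MulAction S (F i)],
    (∀ i, r.IsSemisimple (F i)) → r.IsSemisimple (Σ i, F i)

variable {r : HoehnkeRadical S} {A P : Type u} [MulAction S A] [MulAction S P]

theorem isSemisimple_of_subsingleton (r : HoehnkeRadical S) [Subsingleton A] :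
    r.IsSemisimple A :=
  fun x y _ => Subsingleton.elim x y

theorem IsSemisimple.of_injective (hP : r.IsSemisimple P) {f : A → P} (hf : IsActHom S f)
    (hinj : Function.Injective f) : r.IsSemisimple A :=
  fun x y h => hinj (hP _ _ (r.functorial f hf x y h))

theorem IsSemisimple.subMulAction (hA : r.IsSemisimple A) (C : SubMulAction S A) :
    r.IsSemisimple C :=
  hA.of_injective (f := Subtype.val) (fun _ _ => rfl) Subtype.val_injective

theorem IsSemisimple.map_eq_of_radical (hP : r.IsSemisimple P)
    (hrad : ∀ x y : A, (r.rad A).r x y) {f : A → P} (hf : IsActHom S f) (x y : A) :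
    f x = f y :=
  hP _ _ (r.functorial f hf x y (hrad x y))

/-- Such an `f` factors through the radical act `A / B`. -/
theorem IsSemisimple.map_eq_of_isRDense (hP : r.IsSemisimple P) {B : Set A}
    {hB : ∀ (s : S), ∀ a ∈ B, s • a ∈ B} (hdense : IsRDense r B hB) {f : A → P}
    (hf : IsActHom S f) (hfB : ∀ b ∈ B, ∀ b' ∈ B, f b = f b') (x y : A) : f x = f y := by
  let g : Quotient (reesCong B hB).toSetoid → P :=
    Quotient.lift f (by rintro a b (rfl | ⟨ha, hb⟩); exacts [rfl, hfB a ha b hb])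
  have hg : IsActHom S g := by
    intro s x
    induction x using Quotient.inductionOn with
    | h a => exact hf s a
  exact hP.map_eq_of_radical hdense hg (Quotient.mk _ x) (Quotient.mk _ y)

end HoehnkeRadical

/-- `false ↦ P, true ↦ Q`, indexed by `ULift Bool` so that `Σ i, binaryFamily P Q i` is the
coproduct `P ⊔ Q` in `Type u`. -/
def binaryFamily (P Q : Type u) (i : ULift.{u} Bool) : Type u :=
  Bool.rec P Q i.down

instance binaryFamily.instMulAction (P Q : Type u) [hP : MulAction S P] [hQ : MulAction S Q] :
    ∀ i, MulAction S (binaryFamily P Q i)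
  | ⟨false⟩ => hP
  | ⟨true⟩ => hQ

theorem HoehnkeRadical.IsSemisimple.sigma_binaryFamily {r : HoehnkeRadical S} {P Q : Type u}
    [MulAction S P] [MulAction S Q] (hcop : r.SemisimpleClosedUnderCoproducts)
    (hP : r.IsSemisimple P) (hQ : r.IsSemisimple Q) :
    r.IsSemisimple (Σ i, binaryFamily P Q i) :=
  hcop _ _ (by rintro ⟨_ | _⟩; exacts [hP, hQ])

section collapseCompl

variable {A : Type u} [MulAction S A] (C : SubMulAction S A)

open Classical in
noncomputable def collapseCompl (a : A) : Σ i, binaryFamily PUnit.{u + 1} C i :=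
  if h : a ∈ C then ⟨⟨true⟩, ⟨a, h⟩⟩ else ⟨⟨false⟩, PUnit.unit⟩

theorem collapseCompl_of_mem {a : A} (h : a ∈ C) :
    collapseCompl C a = ⟨⟨true⟩, ⟨a, h⟩⟩ :=
  dif_pos h

theorem collapseCompl_of_notMem {a : A} (h : a ∉ C) :
    collapseCompl C a = ⟨⟨false⟩, PUnit.unit⟩ :=
  dif_neg h

theorem isActHom_collapseCompl (hC : ∀ (s : S) (a : A), a ∉ C → s • a ∉ C) :
    IsActHom S (collapseCompl C) := by
  intro s a
  by_cases ha : a ∈ C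
  · rw [collapseCompl_of_mem C ha, collapseCompl_of_mem C (C.smul_mem s ha)]
    rfl
  · rw [collapseCompl_of_notMem C ha, collapseCompl_of_notMem C (hC s a ha)]
    rfl

end collapseCompl

theorem rdense_proper_subact_of_semisimple {S : Type u} [Monoid S] (r : HoehnkeRadical S)
    (hcop : ∀ (ι : Type u) (F : ι → Type u) [∀ i, MulAction S (F i)],
      (∀ i, ∀ x y : F i, (r.rad (F i)).r x y → x = y) →
      ∀ x y : (Σ i, F i), (r.rad (Σ i, F i)).r x y → x = y)
    {A : Type u} [MulAction S A] (hA : ∀ x y : A, (r.rad A).r x y → x = y)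
    (B : Set A) (hB : IsSubact S B) (hproper : B ≠ Set.univ)
    (hdense : IsRDense r B hB.2) :
    ∃ x, x ∉ B ∧ ∃ s : S, s • x ∈ B := by
  by_contra! hcompl
  obtain ⟨a, ha⟩ := (Set.ne_univ_iff_exists_notMem B).1 hproper
  obtain ⟨b, hb⟩ := hB.1
  let C : SubMulAction S A := ⟨Bᶜ, fun s x hx => hcompl x hx s⟩
  have hsemi : r.IsSemisimple (Σ i, binaryFamily PUnit.{u + 1} C i) :=
    .sigma_binaryFamily hcop r.isSemisimple_of_subsingleton
      (HoehnkeRadical.IsSemisimple.subMulAction hA C)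
  have hcollapse : ∀ x ∈ B, collapseCompl C x = ⟨⟨false⟩, PUnit.unit⟩ :=
    fun x hx => collapseCompl_of_notMem C (not_not_intro hx)
  have hab := hsemi.map_eq_of_isRDense hdense
    (isActHom_collapseCompl C fun s x hx => not_not_intro (hB.2 s x (not_not.mp hx)))
    (fun x hx y hy => (hcollapse x hx).trans (hcollapse y hy).symm) a b
  rw [collapseCompl_of_mem C (show a ∈ Bᶜ from ha), hcollapse b hb] at hab
  cases hab
end

section
/- Let S be a monoid and B a large (essential) subact of an S-act A, meaning the inclusion B ↪ A is an essential monomorphism: any homomorphism g: A → C injective on B is injective. Then B is intersection-large in A: for every subact X of A with |X| ≥ 2, |B ∩ X| ≥ 2. -/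
universe u

variable {S : Type u} [Monoid S]

section ReesQuotient

variable {A : Type u} [MulAction S A] {X : Set A} (hX : ∀ (s : S), ∀ a ∈ X, s • a ∈ X)

theorem isActHom_reesCong_mk : IsActHom S (Quotient.mk (reesCong X hX).toSetoid) :=
  fun _ _ => rfl

theorem injOn_reesCong_mk {B : Set A} (hBX : (B ∩ X).Subsingleton) :
    Set.InjOn (Quotient.mk (reesCong X hX).toSetoid) B := by
  intro a ha b hb hab
  rcases Quotient.exact hab with rfl | ⟨haX, hbX⟩
  · rfl
  · exact hBX ⟨ha, haX⟩ ⟨hb, hbX⟩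

theorem not_injective_reesCong_mk (hXnt : X.Nontrivial) :
    ¬ Function.Injective (Quotient.mk (reesCong X hX).toSetoid) := by
  obtain ⟨x, hx, y, hy, hxy⟩ := hXnt
  exact fun hinj => hxy (hinj (Quotient.sound (Or.inr ⟨hx, hy⟩)))

end ReesQuotient

theorem large_subact_is_intersection_large_general {S : Type u} [Monoid S] {A : Type u}
    [MulAction S A] (B : Set A)
    (hlarge : ∀ (C : Type u) [MulAction S C] (g : A → C), IsActHom S g →
      Set.InjOn g B → Function.Injective g) :
    ∀ X : Set A, IsSubact S X → X.Nontrivial → (B ∩ X).Nontrivial := by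
  intro X hX hXnt
  by_contra hBX
  rw [Set.not_nontrivial_iff] at hBX
  exact not_injective_reesCong_mk hX.2 hXnt
    (hlarge _ _ (isActHom_reesCong_mk hX.2) (injOn_reesCong_mk hX.2 hBX))

theorem large_subact_is_intersection_large {S : Type u} [Monoid S] {A : Type u}
    [MulAction S A] (B : Set A) (hB : IsSubact S B)
    (hlarge : ∀ (C : Type u) [MulAction S C] (g : A → C), IsActHom S g →
      Set.InjOn g B → Function.Injective g) :
    ∀ X : Set A, IsSubact S X → X.Nontrivial → (B ∩ X).Nontrivial :=
  large_subact_is_intersection_large_general B hlarge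
end

section
/- Let r be a Hoehnke radical on S-acts whose radical class R_r = {A : r(A) = ∇_A} is closed under coproducts, and let Q be an r-injective S-act. Then Q has a zero element. -/
universe u

variable {S : Type u} [Monoid S]

/-- An act `Q` is `r`-injective if every homomorphism into `Q` extends along
every `r`-monomorphism (injective homomorphism with `r`-dense image). -/
def RInjective (S : Type u) [Monoid S] (r : HoehnkeRadical S)
    (Q : Type u) [MulAction S Q] : Prop :=
  ∀ (X B : Type u) [MulAction S X] [MulAction S B] (m : X → B)
    (hm : IsActHom S m), Function.Injective m →
    IsRDense r (Set.range m) (range_closed hm) →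
    ∀ f : X → Q, IsActHom S f → ∃ g : B → Q, IsActHom S g ∧ ∀ x, g (m x) = f x

/-!
Embed `Q` into `Q ⊔ Θ`, `Θ` a one-point act. The Rees quotient `(Q ⊔ Θ)/Q` has trivial
action, and every act with trivial action is a homomorphic image of a coproduct of one-point
acts, hence radical; so `Q` is `r`-dense in `Q ⊔ Θ`. Extending `id_Q` along this inclusion
sends the point of `Θ` to a zero of `Q`.
-/

namespace HoehnkeRadical

variable (r : HoehnkeRadical S)

/-- Membership in the radical class `R_r`, i.e. `r(A) = ∇_A`. -/
def IsRadicalAct (A : Type u) [MulAction S A] : Prop :=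
  ∀ x y : A, (r.rad A).r x y

def ClosedUnderCoproducts : Prop :=
  ∀ (ι : Type u) (F : ι → Type u) [∀ i, MulAction S (F i)],
    (∀ i, r.IsRadicalAct (F i)) → r.IsRadicalAct (Σ i, F i)

variable {r}

theorem isRadicalAct_of_subsingleton (A : Type u) [MulAction S A] [Subsingleton A] :
    r.IsRadicalAct A := fun x y =>
  Subsingleton.elim x y ▸ (r.rad A).iseqv.refl x

theorem IsRadicalAct.of_surjective {A B : Type u} [MulAction S A] [MulAction S B]
    {f : A → B} (hf : IsActHom S f) (hsurj : Function.Surjective f)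
    (hA : r.IsRadicalAct A) : r.IsRadicalAct B := by
  intro x y
  obtain ⟨a, rfl⟩ := hsurj x
  obtain ⟨b, rfl⟩ := hsurj y
  exact r.functorial f hf a b (hA a b)

theorem ClosedUnderCoproducts.isRadicalAct_of_smul_eq_self (hcop : r.ClosedUnderCoproducts)
    {A : Type u} [MulAction S A] (htriv : ∀ (s : S) (a : A), s • a = a) :
    r.IsRadicalAct A := by
  have hΘ : r.IsRadicalAct (Σ _ : A, PUnit.{u + 1}) :=
    hcop A _ fun _ => isRadicalAct_of_subsingleton _
  exact hΘ.of_surjective (f := Sigma.fst) (fun s p => (htriv s p.1).symm)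
    fun a => ⟨⟨a, PUnit.unit⟩, rfl⟩

end HoehnkeRadical

theorem reesQuotient_smul_eq_self {A : Type u} [MulAction S A] {B : Set A}
    (hB : ∀ (s : S), ∀ a ∈ B, s • a ∈ B) (hfix : ∀ (s : S), ∀ a ∉ B, s • a = a)
    (s : S) (x : Quotient (reesCong B hB).toSetoid) : s • x = x := by
  induction x using Quotient.inductionOn with
  | h a =>
    by_cases ha : a ∈ B
    · exact Quotient.sound (Or.inr ⟨hB s a ha, ha⟩)
    · exact congrArg (Quotient.mk _) (hfix s a ha)

theorem isActHom_inl (A B : Type u) [MulAction S A] [MulAction S B] :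
    IsActHom S (Sum.inl : A → A ⊕ B) := fun _ _ => rfl

theorem isRDense_range_inl_sum_punit {r : HoehnkeRadical S}
    (hcop : r.ClosedUnderCoproducts) (Q : Type u) [MulAction S Q] :
    IsRDense r (Set.range (Sum.inl : Q → Q ⊕ PUnit.{u + 1})) (range_closed (isActHom_inl _ _)) :=
  hcop.isRadicalAct_of_smul_eq_self <| reesQuotient_smul_eq_self _ fun s a ha => by
    obtain _ | ⟨⟨⟩⟩ := a
    · exact absurd ⟨_, rfl⟩ ha
    · rfl

theorem rinjective_has_zero {S : Type u} [Monoid S] (r : HoehnkeRadical S)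
    (hcop : ∀ (ι : Type u) (F : ι → Type u) [∀ i, MulAction S (F i)],
      (∀ i, ∀ x y : F i, (r.rad (F i)).r x y) →
      ∀ x y : (Σ i, F i), (r.rad (Σ i, F i)).r x y)
    (Q : Type u) [MulAction S Q] (hQ : RInjective S r Q) :
    ∃ θ : Q, ∀ s : S, s • θ = θ := by
  obtain ⟨g, hg, -⟩ := hQ Q (Q ⊕ PUnit.{u + 1}) Sum.inl (isActHom_inl _ _) Sum.inl_injective
    (isRDense_range_inl_sum_punit hcop Q) id fun _ _ => rfl
  exact ⟨g (Sum.inr PUnit.unit), fun s => (hg s _).symm⟩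
end
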